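/- For a > 0 and λ > 0, ∫₀^∞ (a / (√(2π) · t^{3/2})) · exp(−a²/(2t)) · exp(−λ·t) dt = exp(−a·√(2λ)). -/

import Mathlib

/-!
Substituting `t = a² / (2x²)` turns the integral into `(2 / √π) ∫₀^∞ exp (-(x² + b²/x²)) dx` with
`b = a √(2λ) / 2`, and `x² + b²/x² = (x - b/x)² + 2b`. For an even integrable `f`, the
Cauchy–Schlömilch argument gives `∫₀^∞ f (x - b/x) dx = ½ ∫ f`: the substitution `u = x - b/x`
integrates `f` against the weight `1 + b/x²`, and the inversion `x ↦ b/x` shows that the parts `1`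
and `b/x²` of the weight contribute equally. With `f u = exp (-u²)` this yields `exp (-a √(2λ))`.
-/

open MeasureTheory Real Set

section CauchySchlomilch

variable {E : Type*} [NormedAddCommGroup E] [NormedSpace ℝ E] {b : ℝ}

theorem integral_Ioi_smul_comp_const_div_pow (g : ℝ → E) {c : ℝ} (hc : 0 < c) {n : ℕ}
    (hn : n ≠ 0) :
    ∫ x in Ioi 0, (n * c / x ^ (n + 1)) • g (c / x ^ n) = ∫ t in Ioi 0, g t := by
  have hn' : (-n : ℝ) ≠ 0 := by simpa using hn
  calc ∫ x in Ioi 0, (n * c / x ^ (n + 1)) • g (c / x ^ n)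
      = c • ∫ x in Ioi 0, (|(-n : ℝ)| * x ^ ((-n : ℝ) - 1)) • g (c * x ^ (-n : ℝ)) := by
        rw [← integral_smul]
        refine setIntegral_congr_fun measurableSet_Ioi fun x (hx : 0 < x) => ?_
        rw [smul_smul, rpow_sub hx, rpow_neg hx.le, rpow_natCast, rpow_one, abs_neg,
          Nat.abs_cast, div_eq_mul_inv c]
        congr 1
        field_simp
        ring
    _ = c • ∫ t in Ioi 0, g (c * t) := by rw [integral_comp_rpow_Ioi (fun t => g (c * t)) hn']
    _ = ∫ t in Ioi 0, g t := by
        rw [integral_comp_mul_left_Ioi g 0 hc, mul_zero, smul_smul, mul_inv_cancel₀ hc.ne',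
          one_smul]

theorem hasDerivAt_sub_div (b : ℝ) {x : ℝ} (hx : x ≠ 0) :
    HasDerivAt (fun x => x - b / x) (1 + b / x ^ 2) x := by
  rw [show 1 + b / x ^ 2 = 1 - b * -(x ^ 2)⁻¹ by ring]
  simpa only [div_eq_mul_inv] using (hasDerivAt_id' x).fun_sub ((hasDerivAt_inv hx).const_mul b)

theorem strictMonoOn_sub_div (hb : 0 < b) : StrictMonoOn (fun x => x - b / x) (Ioi 0) :=
  fun x (hx : 0 < x) _ _ hxy => sub_lt_sub hxy (div_lt_div_of_pos_left hb hx hxy)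

theorem image_sub_div_Ioi (hb : 0 < b) : (fun x => x - b / x) '' Ioi 0 = univ := by
  refine eq_univ_of_forall fun y => ?_
  -- the positive root of `x ^ 2 - y * x - b`
  set s := √(y ^ 2 + 4 * b)
  have hs : s ^ 2 = y ^ 2 + 4 * b := sq_sqrt (by positivity)
  have hys : 0 < y + s := by nlinarith [sqrt_nonneg (y ^ 2 + 4 * b)]
  refine ⟨(y + s) / 2, half_pos hys, ?_⟩
  field_simp
  nlinarith

theorem integral_Ioi_smul_comp_sub_div (hb : 0 < b) (f : ℝ → E) :
    ∫ x in Ioi 0, (1 + b / x ^ 2) • f (x - b / x) = ∫ u, f u := by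
  have key := integral_image_eq_integral_abs_deriv_smul measurableSet_Ioi
    (fun x (hx : 0 < x) => (hasDerivAt_sub_div b hx.ne').hasDerivWithinAt)
    (strictMonoOn_sub_div hb).injOn f
  rw [image_sub_div_Ioi hb, setIntegral_univ] at key
  rw [key]
  refine setIntegral_congr_fun measurableSet_Ioi fun x (hx : 0 < x) => ?_
  rw [abs_of_pos (by positivity)]

theorem integrableOn_Ioi_smul_comp_sub_div (hb : 0 < b) {f : ℝ → E} (hf : Integrable f) :
    IntegrableOn (fun x => (1 + b / x ^ 2) • f (x - b / x)) (Ioi 0) := by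
  have key := integrableOn_image_iff_integrableOn_abs_deriv_smul measurableSet_Ioi
    (fun x (hx : 0 < x) => (hasDerivAt_sub_div b hx.ne').hasDerivWithinAt)
    (strictMonoOn_sub_div hb).injOn f
  rw [image_sub_div_Ioi hb, integrableOn_univ] at key
  refine (key.mp hf).congr_fun (fun x (hx : 0 < x) => ?_) measurableSet_Ioi
  simp only [abs_of_pos (by positivity : 0 < 1 + b / x ^ 2)]

theorem integrableOn_Ioi_comp_sub_div (hb : 0 < b) {f : ℝ → E} (hf : Integrable f) :
    IntegrableOn (fun x => f (x - b / x)) (Ioi 0) := by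
  have hweight_inv : ContinuousOn (fun x : ℝ => (1 + b / x ^ 2)⁻¹) (Ioi 0) := by
    refine ContinuousOn.inv₀ (by fun_prop (disch := exact fun x (hx : 0 < x) => by positivity)) ?_
    exact fun x (hx : 0 < x) => by positivity
  have : IntegrableOn (fun x : ℝ => (1 + b / x ^ 2)⁻¹ • (1 + b / x ^ 2) • f (x - b / x)) (Ioi 0) :=
    (integrableOn_Ioi_smul_comp_sub_div hb hf).bdd_smul 1
    (hweight_inv.aestronglyMeasurable measurableSet_Ioi) ?_
  · refine this.congr_fun (fun x (hx : 0 < x) => ?_) measurableSet_Ioi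
    simp [smul_smul, inv_mul_cancel₀ (by positivity : 1 + b / x ^ 2 ≠ 0)]
  · filter_upwards [ae_restrict_mem measurableSet_Ioi] with x (hx : 0 < x)
    rw [norm_inv, norm_of_nonneg (by positivity)]
    exact inv_le_one_of_one_le₀ (le_add_of_nonneg_right (by positivity))

theorem integral_Ioi_div_sq_smul (g : ℝ → E) (hb : 0 < b) :
    ∫ x in Ioi 0, (b / x ^ 2) • g x = ∫ x in Ioi 0, g (b / x) := by
  simpa [div_div_cancel₀ hb.ne'] using
    integral_Ioi_smul_comp_const_div_pow (fun t => g (b / t)) hb one_ne_zero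

theorem integral_Ioi_comp_sub_div_of_even (hb : 0 < b) {f : ℝ → E} (hf : Integrable f)
    (hf_even : ∀ u, f (-u) = f u) :
    ∫ x in Ioi 0, f (x - b / x) = (2 : ℝ)⁻¹ • ∫ u, f u := by
  set g := fun x => f (x - b / x)
  have hg : IntegrableOn g (Ioi 0) := integrableOn_Ioi_comp_sub_div hb hf
  have hbg : IntegrableOn (fun x => (b / x ^ 2) • g x) (Ioi 0) := by
    refine ((integrableOn_Ioi_smul_comp_sub_div hb hf).sub hg).congr_fun (fun x _ => ?_)
      measurableSet_Ioi
    simp only [Pi.sub_apply, add_smul, one_smul, g, add_sub_cancel_left]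
  -- `x ↦ b / x` maps `x - b / x` to its negative
  have hinv : ∫ x in Ioi 0, (b / x ^ 2) • g x = ∫ x in Ioi 0, g x := by
    rw [integral_Ioi_div_sq_smul g hb]
    refine setIntegral_congr_fun measurableSet_Ioi fun x _ => ?_
    simp only [g, div_div_cancel₀ hb.ne', ← hf_even (x - b / x), neg_sub]
  rw [← integral_Ioi_smul_comp_sub_div hb f]
  simp only [add_smul, one_smul]
  rw [integral_add hg hbg, hinv, ← two_smul ℝ, smul_smul, inv_mul_cancel₀ two_ne_zero, one_smul]

end CauchySchlomilch

theorem integral_Ioi_exp_neg_sq_add_div_sq {b : ℝ} (hb : 0 < b) :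
    ∫ x in Ioi 0, exp (-(x ^ 2 + b ^ 2 / x ^ 2)) = √π / 2 * exp (-(2 * b)) := by
  have hgauss : Integrable fun u : ℝ => exp (-u ^ 2) := by
    simpa using integrable_exp_neg_mul_sq one_pos
  calc ∫ x in Ioi 0, exp (-(x ^ 2 + b ^ 2 / x ^ 2))
      = exp (-(2 * b)) * ∫ x in Ioi 0, exp (-(x - b / x) ^ 2) := by
        rw [← integral_const_mul]
        refine setIntegral_congr_fun measurableSet_Ioi fun x (hx : 0 < x) => ?_
        rw [← exp_add]
        congr 1
        field_simp
        ring
    _ = √π / 2 * exp (-(2 * b)) := by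
        have hπ : ∫ u : ℝ, exp (-u ^ 2) = √π := by simpa using integral_gaussian 1
        rw [integral_Ioi_comp_sub_div_of_even hb hgauss (by simp), smul_eq_mul, hπ]
        ring

noncomputable def levyDensity (a t : ℝ) : ℝ :=
  a / (√(2 * π) * t ^ ((3 : ℝ) / 2)) * exp (-a ^ 2 / (2 * t))

theorem sq_rpow_three_div_two {y : ℝ} (hy : 0 ≤ y) : (y ^ 2) ^ ((3 : ℝ) / 2) = y ^ 3 := by
  rw [← rpow_natCast, ← rpow_mul hy]
  norm_num

theorem levyDensity_div_sq {a : ℝ} (ha : 0 < a) {x : ℝ} (hx : 0 < x) :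
    a ^ 2 / x ^ 3 * levyDensity a (a ^ 2 / (2 * x ^ 2)) = 2 / √π * exp (-x ^ 2) := by
  have h2 : √2 ^ 2 = 2 := sq_sqrt zero_le_two
  have hpow : (a ^ 2 / (2 * x ^ 2)) ^ ((3 : ℝ) / 2) = (a / (√2 * x)) ^ 3 := by
    rw [← sq_rpow_three_div_two (by positivity : 0 ≤ a / (√2 * x)), div_pow, mul_pow, h2]
  rw [levyDensity, hpow, sqrt_mul zero_le_two]
  have : -a ^ 2 / (2 * (a ^ 2 / (2 * x ^ 2))) = -x ^ 2 := by field_simp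
  rw [this]
  field_simp
  exact h2

theorem levy_identity (a lam : ℝ) (ha : 0 < a) (hlam : 0 < lam) :
    ∫ t in Ioi (0 : ℝ),
        (a / (Real.sqrt (2 * π) * t ^ ((3:ℝ)/2))) * Real.exp (-a ^ 2 / (2 * t)) *
          Real.exp (-lam * t)
      = Real.exp (-a * Real.sqrt (2 * lam)) := by
  set b := a * √(2 * lam) / 2
  have hb : 0 < b := by positivity
  have hb2 : b ^ 2 = lam * a ^ 2 / 2 := by
    rw [div_pow, mul_pow, sq_sqrt (by positivity)]
    ring
  calc _ = ∫ t in Ioi 0, levyDensity a t * exp (-lam * t) := rfl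
    _ = ∫ x in Ioi 0, 2 / √π * exp (-(x ^ 2 + b ^ 2 / x ^ 2)) := by
        rw [← integral_Ioi_smul_comp_const_div_pow _ (by positivity : 0 < a ^ 2 / 2) two_ne_zero]
        refine setIntegral_congr_fun measurableSet_Ioi fun x (hx : 0 < x) => ?_
        have hc : ((2 : ℕ) : ℝ) * (a ^ 2 / 2) / x ^ (2 + 1) = a ^ 2 / x ^ 3 := by push_cast; ring
        rw [smul_eq_mul, hc, div_div, ← mul_assoc, levyDensity_div_sq ha hx, neg_add, exp_add,
          hb2, mul_assoc]
        congr 3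
        field_simp
    _ = exp (-a * √(2 * lam)) := by
        have h2b : 2 * b = a * √(2 * lam) := by ring
        rw [integral_const_mul, integral_Ioi_exp_neg_sq_add_div_sq hb, h2b, neg_mul]
        field_simp
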